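/- arXiv:1606.09070 — 2 statements merged into one kernel-verified Lean document; each statement's English description precedes it below -/
import Mathlib

section
/- Let F : ℝ^(2N) → ℝ ∪ {+∞} be proper and lower semicontinuous, let a > 0, and let z* = (x*, x*) ∈ dom F be a local minimizer of F. Suppose that for every δ > 0, F satisfies the growth condition F(y) ≥ F(z*) − (a/16)‖y₂ − x*‖² for all y = (y₁, y₂) ∈ ℝ^(2N) with y₂ ∉ B_δ(x*). Then F satisfies condition (H4) at z*: for any δ > 0 there exist 0 < ρ < δ and ν > 0 such that whenever z ∈ B_ρ(z*), F(z) < F(z*) + ν, and y₂ ∉ B_δ(x*), one has F(z) < F(y) + (a/4)‖z₂ − y₂‖². -/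
/-!
Take `ρ = δ / 4` and `ν = 5aδ²/64`. If `‖z₂ - x*‖ ≤ δ/4 < δ < c := ‖y₂ - x*‖`, the triangle
inequality gives `‖z₂ - y₂‖ ≥ c - δ/4 ≥ 3c/4`, so `(a/4)‖z₂ - y₂‖² ≥ (9a/64) c²`. The growth
condition costs only `(a/16) c² = (4a/64) c²` of this, and the remaining `(5a/64) c² > ν`
absorbs the slack in `F(z) < F(z*) + ν`.
-/

open Metric

theorem dist_gap_of_dist_le_quarter {E : Type*} [PseudoMetricSpace E] {a δ : ℝ} (ha : 0 ≤ a)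
    {x w y : E} (hw : dist w x ≤ δ / 4) (hy : δ < dist y x) :
    5 * a / 64 * δ ^ 2 + a / 16 * dist y x ^ 2 ≤ a / 4 * dist w y ^ 2 := by
  have hfar : 3 / 4 * dist y x ≤ dist w y := by
    linarith [dist_triangle y w x, dist_comm y w]
  have hδ : δ ^ 2 ≤ dist y x ^ 2 := by nlinarith [dist_nonneg (x := w) (y := x)]
  have hsq : (3 / 4 * dist y x) ^ 2 ≤ dist w y ^ 2 := by gcongr
  nlinarith [mul_le_mul_of_nonneg_left hδ ha, mul_le_mul_of_nonneg_left hsq ha]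

theorem EReal.lt_add_of_lt_coe_add_of_coe_sub_le {u v : EReal} {r ν g h : ℝ}
    (hu : u < ((r + ν : ℝ) : EReal)) (hv : ((r - g : ℝ) : EReal) ≤ v) (hgap : ν + g ≤ h) :
    u < v + h :=
  calc u < ((r + ν : ℝ) : EReal) := hu
    _ ≤ ((r - g : ℝ) : EReal) + (h : EReal) := by
      rw [← EReal.coe_add, EReal.coe_le_coe_iff]
      linarith
    _ ≤ v + h := add_le_add_left hv _

theorem stmt0_general {N : ℕ}
    (F : (EuclideanSpace ℝ (Fin N)) × (EuclideanSpace ℝ (Fin N)) → EReal)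
    (hbot : ∀ z, F z ≠ ⊥)
    (a : ℝ) (ha : 0 < a)
    (xstar : EuclideanSpace ℝ (Fin N))
    (hdom : F (xstar, xstar) ≠ ⊤)
    (hgrowth : ∀ δ > (0 : ℝ),
        ∀ y : (EuclideanSpace ℝ (Fin N)) × (EuclideanSpace ℝ (Fin N)),
        y.2 ∉ closedBall xstar δ →
        F (xstar, xstar) - (((a / 16) * ‖y.2 - xstar‖ ^ 2 : ℝ) : EReal) ≤ F y) :
    ∀ δ > (0 : ℝ), ∃ ρ > (0 : ℝ), ρ < δ ∧ ∃ ν > (0 : ℝ),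
      ∀ z y : (EuclideanSpace ℝ (Fin N)) × (EuclideanSpace ℝ (Fin N)),
        z ∈ closedBall (xstar, xstar) ρ →
        F z < F (xstar, xstar) + ((ν : ℝ) : EReal) →
        y.2 ∉ closedBall xstar δ →
        F z < F y + (((a / 4) * ‖z.2 - y.2‖ ^ 2 : ℝ) : EReal) := by
  intro δ hδ
  refine ⟨δ / 4, by positivity, by linarith, 5 * a / 64 * δ ^ 2, by positivity, ?_⟩
  intro z y hz hFz hy
  have hr : F (xstar, xstar) = ((F (xstar, xstar)).toReal : EReal) :=
    (EReal.coe_toReal hdom (hbot _)).symm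
  have hgrowth_y := hgrowth δ hδ y hy
  rw [hr, ← EReal.coe_sub] at hgrowth_y
  rw [hr, ← EReal.coe_add] at hFz
  refine EReal.lt_add_of_lt_coe_add_of_coe_sub_le hFz hgrowth_y ?_
  have hz₂ : dist z.2 xstar ≤ δ / 4 :=
    (le_max_right _ _).trans (Prod.dist_eq (x := z) (y := (xstar, xstar)) ▸ mem_closedBall.mp hz)
  simpa only [dist_eq_norm] using
    dist_gap_of_dist_le_quarter ha.le hz₂ (not_le.mp (mem_closedBall.not.mp hy))

/-- The growth condition of Lemma `lem:local-growth` implies condition (H4). -/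
theorem stmt0 {N : ℕ}
    (F : (EuclideanSpace ℝ (Fin N)) × (EuclideanSpace ℝ (Fin N)) → EReal)
    (hbot : ∀ z, F z ≠ ⊥) (hproper : ∃ z, F z ≠ ⊤)
    (hlsc : LowerSemicontinuous F)
    (a : ℝ) (ha : 0 < a)
    (xstar : EuclideanSpace ℝ (Fin N))
    (hdom : F (xstar, xstar) ≠ ⊤)
    (hmin : ∃ ε > (0 : ℝ), ∀ z ∈ closedBall (xstar, xstar) ε, F (xstar, xstar) ≤ F z)
    (hgrowth : ∀ δ > (0 : ℝ),
        ∀ y : (EuclideanSpace ℝ (Fin N)) × (EuclideanSpace ℝ (Fin N)),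
        y.2 ∉ closedBall xstar δ →
        F (xstar, xstar) - (((a / 16) * ‖y.2 - xstar‖ ^ 2 : ℝ) : EReal) ≤ F y) :
    ∀ δ > (0 : ℝ), ∃ ρ > (0 : ℝ), ρ < δ ∧ ∃ ν > (0 : ℝ),
      ∀ z y : (EuclideanSpace ℝ (Fin N)) × (EuclideanSpace ℝ (Fin N)),
        z ∈ closedBall (xstar, xstar) ρ →
        F z < F (xstar, xstar) + ((ν : ℝ) : EReal) →
        y.2 ∉ closedBall xstar δ →
        F z < F y + (((a / 4) * ‖z.2 - y.2‖ ^ 2 : ℝ) : EReal) :=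
  stmt0_general F hbot a ha xstar hdom hgrowth
end

section
/- Let F : ℝ^(2N) → ℝ ∪ {+∞}, a > 0, and let (x^k) be a sequence in ℝ^N with z^k = (x^k, x^{k−1}) satisfying the sufficient decrease condition F(z^{k+1}) + a‖x^k − x^{k−1}‖² ≤ F(z^k) for all k. Suppose z* = (x*, x*) and δ > 0 are such that condition (H4) holds: whenever z ∈ B_ρ(z*), F(z) < F(z*) + ν, and y₂ ∉ B_δ(x*), one has F(z) < F(y) + (a/4)‖z₂ − y₂‖². Then for any k with z^k ∈ B_ρ(z*) and F(z*) < F(z^k) < F(z*) + ν, it follows that x^{k+1} ∈ B_δ(x*). -/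
/-!
If `x^{k+1}` left the `δ`-ball, (H4) applied to `z^k` and `z^{k+2}` would give
`F(z^k) < F(z^{k+2}) + (a/4)‖x^{k-1} - x^{k+1}‖²`, while two steps of sufficient decrease give
`F(z^{k+2}) + a(‖x^{k+1} - x^k‖² + ‖x^k - x^{k-1}‖²) ≤ F(z^k)`; since
`‖u + v‖² ≤ 2(‖u‖² + ‖v‖²)`, together these force `F(z^k) < F(z^k)`.
-/

open Metric

theorem norm_sub_sq_le_two_mul {E : Type*} [SeminormedAddCommGroup E] (u v w : E) :
    ‖u - w‖ ^ 2 ≤ 2 * (‖u - v‖ ^ 2 + ‖v - w‖ ^ 2) :=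
  calc ‖u - w‖ ^ 2 ≤ (‖u - v‖ + ‖v - w‖) ^ 2 := by
        gcongr
        exact norm_sub_le_norm_sub_add_norm_sub u v w
    _ ≤ 2 * (‖u - v‖ ^ 2 + ‖v - w‖ ^ 2) := add_sq_le

theorem EReal.add_coe_add_le_of_step_decrease {f : ℕ → EReal} {c : ℕ → ℝ}
    (hdec : ∀ k, f (k + 1) + (c k : EReal) ≤ f k) (k : ℕ) :
    f (k + 2) + ((c (k + 1) + c k : ℝ) : EReal) ≤ f k :=
  calc f (k + 2) + ((c (k + 1) + c k : ℝ) : EReal)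
      = f (k + 2) + (c (k + 1) : EReal) + (c k : EReal) := by
        rw [EReal.coe_add, add_assoc]
    _ ≤ f (k + 1) + (c k : EReal) := by gcongr; exact hdec (k + 1)
    _ ≤ f k := hdec k

/-- Here `x (k+1)` plays the role of `x^k`, so that `z^k = (x (k+1), x k)`. -/
theorem stmt1_general {N : ℕ}
    (F : (EuclideanSpace ℝ (Fin N)) × (EuclideanSpace ℝ (Fin N)) → EReal)
    (a : ℝ) (ha : 0 < a)
    (x : ℕ → EuclideanSpace ℝ (Fin N))
    (hdec : ∀ k : ℕ,
      F (x (k + 2), x (k + 1)) + ((a * ‖x (k + 1) - x k‖ ^ 2 : ℝ) : EReal)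
        ≤ F (x (k + 1), x k))
    (xstar : EuclideanSpace ℝ (Fin N))
    (ρ ν δ : ℝ)
    (hH4 : ∀ z y : (EuclideanSpace ℝ (Fin N)) × (EuclideanSpace ℝ (Fin N)),
        z ∈ closedBall (xstar, xstar) ρ →
        F z < F (xstar, xstar) + ((ν : ℝ) : EReal) →
        y.2 ∉ closedBall xstar δ →
        F z < F y + (((a / 4) * ‖z.2 - y.2‖ ^ 2 : ℝ) : EReal))
    (k : ℕ)
    (hk : (x (k + 1), x k) ∈ closedBall (xstar, xstar) ρ)
    (hup : F (x (k + 1), x k) < F (xstar, xstar) + ((ν : ℝ) : EReal)) :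
    x (k + 2) ∈ closedBall xstar δ := by
  by_contra hout
  have hH4k := hH4 (x (k + 1), x k) (x (k + 3), x (k + 2)) hk hup hout
  have two_steps := EReal.add_coe_add_le_of_step_decrease
    (f := fun k ↦ F (x (k + 1), x k)) (c := fun k ↦ a * ‖x (k + 1) - x k‖ ^ 2) hdec k
  have gap : a / 4 * ‖x k - x (k + 2)‖ ^ 2
      ≤ a * ‖x (k + 2) - x (k + 1)‖ ^ 2 + a * ‖x (k + 1) - x k‖ ^ 2 := by
    rw [norm_sub_rev (x k)]
    nlinarith [mul_le_mul_of_nonneg_left (norm_sub_sq_le_two_mul (x (k + 2)) (x (k + 1)) (x k))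
      ha.le, sq_nonneg ‖x (k + 2) - x (k + 1)‖, sq_nonneg ‖x (k + 1) - x k‖]
  refine lt_irrefl (F (x (k + 1), x k)) ?_
  calc F (x (k + 1), x k)
      < F (x (k + 3), x (k + 2)) + ((a / 4 * ‖x k - x (k + 2)‖ ^ 2 : ℝ) : EReal) := hH4k
    _ ≤ F (x (k + 3), x (k + 2))
        + ((a * ‖x (k + 2) - x (k + 1)‖ ^ 2 + a * ‖x (k + 1) - x k‖ ^ 2 : ℝ) : EReal) := by
      gcongr
    _ ≤ F (x (k + 1), x k) := two_steps

/-- Under the sufficient decrease condition (H1) and condition (H4),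
iterates near the local minimizer stay in the `δ`-ball.
Here `x (k+1)` plays the role of `x^k`, so that `z^k = (x (k+1), x k)`. -/
theorem stmt1 {N : ℕ}
    (F : (EuclideanSpace ℝ (Fin N)) × (EuclideanSpace ℝ (Fin N)) → EReal)
    (a : ℝ) (ha : 0 < a)
    (x : ℕ → EuclideanSpace ℝ (Fin N))
    (hdec : ∀ k : ℕ,
      F (x (k + 2), x (k + 1)) + ((a * ‖x (k + 1) - x k‖ ^ 2 : ℝ) : EReal)
        ≤ F (x (k + 1), x k))
    (xstar : EuclideanSpace ℝ (Fin N))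
    (ρ ν δ : ℝ) (hρ : 0 < ρ) (hν : 0 < ν) (hδ : 0 < δ)
    (hH4 : ∀ z y : (EuclideanSpace ℝ (Fin N)) × (EuclideanSpace ℝ (Fin N)),
        z ∈ closedBall (xstar, xstar) ρ →
        F z < F (xstar, xstar) + ((ν : ℝ) : EReal) →
        y.2 ∉ closedBall xstar δ →
        F z < F y + (((a / 4) * ‖z.2 - y.2‖ ^ 2 : ℝ) : EReal))
    (k : ℕ)
    (hk : (x (k + 1), x k) ∈ closedBall (xstar, xstar) ρ)
    (hlow : F (xstar, xstar) < F (x (k + 1), x k))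
    (hup : F (x (k + 1), x k) < F (xstar, xstar) + ((ν : ℝ) : EReal)) :
    x (k + 2) ∈ closedBall xstar δ :=
  stmt1_general F a ha x hdec xstar ρ ν δ hH4 k hk hup
end
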